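/- Let g : ℝ → ℝ be smooth, 2π-periodic and strictly positive, let T ∈ ℝ, and let κ : ℝ × (−∞, T) → ℝ be smooth, strictly positive, 2π-periodic in its first variable θ, and satisfy ∂_τ κ = κ²(∂²_θ(gκ) + gκ) (an ancient solution). Then ∂_τ κ(θ, τ) ≥ 0 for all θ and all τ < T; i.e. the curvature, as a function of the tangent angle, is nondecreasing in time. -/

import Mathlib

noncomputable section

open Real Set Filter

/-- Partial derivative in the first variable (the tangent angle `θ`), at fixed time. -/
def pd1 (f : ℝ × ℝ → ℝ) (p : ℝ × ℝ) : ℝ :=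
  deriv (fun θ => f (θ, p.2)) p.1

/-- Partial derivative in the second (time) variable `τ`, at fixed tangent angle `θ`. -/
def pd2 (f : ℝ × ℝ → ℝ) (p : ℝ × ℝ) : ℝ :=
  deriv (fun τ => f (p.1, τ)) p.2

lemma hasDerivAt_slice1 {f : ℝ × ℝ → ℝ} {f' : ℝ × ℝ →L[ℝ] ℝ} {p : ℝ × ℝ}
    (hf : HasFDerivAt f f' p) :
    HasDerivAt (fun θ => f (θ, p.2)) (f' (1, 0)) p.1 := by
  have h1 : HasDerivAt (fun θ : ℝ => (θ, p.2)) ((1 : ℝ), (0 : ℝ)) p.1 :=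
    (hasDerivAt_id p.1).prodMk (hasDerivAt_const _ _)
  have h2 := hf.comp_hasDerivAt (x := p.1) (by simpa using h1)
  simpa [Function.comp_def] using h2

lemma hasDerivAt_slice2 {f : ℝ × ℝ → ℝ} {f' : ℝ × ℝ →L[ℝ] ℝ} {p : ℝ × ℝ}
    (hf : HasFDerivAt f f' p) :
    HasDerivAt (fun τ => f (p.1, τ)) (f' (0, 1)) p.2 := by
  have h1 : HasDerivAt (fun τ : ℝ => (p.1, τ)) ((0 : ℝ), (1 : ℝ)) p.2 :=
    (hasDerivAt_const _ _).prodMk (hasDerivAt_id p.2)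
  have h2 := hf.comp_hasDerivAt (x := p.2) (by simpa using h1)
  simpa [Function.comp_def] using h2

lemma pd1_eq_fderiv {f : ℝ × ℝ → ℝ} {p : ℝ × ℝ} (hf : DifferentiableAt ℝ f p) :
    pd1 f p = fderiv ℝ f p (1, 0) :=
  (hasDerivAt_slice1 hf.hasFDerivAt).deriv

lemma pd2_eq_fderiv {f : ℝ × ℝ → ℝ} {p : ℝ × ℝ} (hf : DifferentiableAt ℝ f p) :
    pd2 f p = fderiv ℝ f p (0, 1) :=
  (hasDerivAt_slice2 hf.hasFDerivAt).deriv

lemma contDiffOn_pd1 {U : Set (ℝ × ℝ)} {f : ℝ × ℝ → ℝ}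
    (hf : ContDiffOn ℝ (⊤ : ℕ∞) f U) (hU : IsOpen U) :
    ContDiffOn ℝ (⊤ : ℕ∞) (pd1 f) U := by
  have hfd : ContDiffOn ℝ (⊤ : ℕ∞) (fderiv ℝ f) U := hf.fderiv_of_isOpen hU (by simp)
  have h2 : ContDiffOn ℝ (⊤ : ℕ∞) (fun p => fderiv ℝ f p (1, 0)) U :=
    (ContinuousLinearMap.apply ℝ ℝ ((1 : ℝ), (0 : ℝ))).contDiff.comp_contDiffOn hfd
  exact h2.congr fun p hp =>
    pd1_eq_fderiv ((hf.contDiffAt (hU.mem_nhds hp)).differentiableAt (by simp))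

lemma contDiffOn_pd2 {U : Set (ℝ × ℝ)} {f : ℝ × ℝ → ℝ}
    (hf : ContDiffOn ℝ (⊤ : ℕ∞) f U) (hU : IsOpen U) :
    ContDiffOn ℝ (⊤ : ℕ∞) (pd2 f) U := by
  have hfd : ContDiffOn ℝ (⊤ : ℕ∞) (fderiv ℝ f) U := hf.fderiv_of_isOpen hU (by simp)
  have h2 : ContDiffOn ℝ (⊤ : ℕ∞) (fun p => fderiv ℝ f p (0, 1)) U :=
    (ContinuousLinearMap.apply ℝ ℝ ((0 : ℝ), (1 : ℝ))).contDiff.comp_contDiffOn hfd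
  exact h2.congr fun p hp =>
    pd2_eq_fderiv ((hf.contDiffAt (hU.mem_nhds hp)).differentiableAt (by simp))

lemma pd_comm {U : Set (ℝ × ℝ)} {f : ℝ × ℝ → ℝ} (hf : ContDiffOn ℝ (⊤ : ℕ∞) f U)
    (hU : IsOpen U) {p : ℝ × ℝ} (hp : p ∈ U) : pd1 (pd2 f) p = pd2 (pd1 f) p := by
  set f' : ℝ × ℝ → (ℝ × ℝ) →L[ℝ] ℝ := fderiv ℝ f with hf'def
  have hdiff : ∀ q ∈ U, DifferentiableAt ℝ f q := fun q hq =>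
    (hf.contDiffAt (hU.mem_nhds hq)).differentiableAt (by simp)
  have hf' : ContDiffOn ℝ (⊤ : ℕ∞) f' U := hf.fderiv_of_isOpen hU (by simp)
  have hf'p : DifferentiableAt ℝ f' p :=
    (hf'.contDiffAt (hU.mem_nhds hp)).differentiableAt (by simp)
  set f'' : (ℝ × ℝ) →L[ℝ] (ℝ × ℝ) →L[ℝ] ℝ := fderiv ℝ f' p with hf''def
  have hev : ∀ᶠ y in nhds p, HasFDerivAt f (f' y) y := by
    filter_upwards [hU.mem_nhds hp] with y hy using (hdiff y hy).hasFDerivAt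
  have hsymm : ∀ v w : ℝ × ℝ, f'' v w = f'' w v :=
    second_derivative_symmetric_of_eventually hev hf'p.hasFDerivAt
  have hA : pd1 (pd2 f) p = f'' (1, 0) (0, 1) := by
    have heq : ∀ᶠ θ in nhds p.1, pd2 f (θ, p.2) = f' (θ, p.2) (0, 1) := by
      have hopen : IsOpen {θ : ℝ | (θ, p.2) ∈ U} :=
        hU.preimage (by fun_prop : Continuous fun θ : ℝ => (θ, p.2))
      have hmem : p.1 ∈ {θ : ℝ | (θ, p.2) ∈ U} := hp
      filter_upwards [hopen.mem_nhds hmem] with θ hθ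
      exact (hasDerivAt_slice2 (hdiff _ hθ).hasFDerivAt).deriv
    have h1 : pd1 (pd2 f) p = deriv (fun θ => f' (θ, p.2) (0, 1)) p.1 :=
      Filter.EventuallyEq.deriv_eq heq
    rw [h1]
    have h2 : HasFDerivAt (fun q => f' q (0, 1))
        ((ContinuousLinearMap.apply ℝ ℝ ((0 : ℝ), (1 : ℝ))).comp f'') p :=
      (ContinuousLinearMap.apply ℝ ℝ ((0 : ℝ), (1 : ℝ))).hasFDerivAt.comp p hf'p.hasFDerivAt
    have h3 := hasDerivAt_slice1 h2
    simpa using h3.deriv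
  have hB : pd2 (pd1 f) p = f'' (0, 1) (1, 0) := by
    have heq : ∀ᶠ τ in nhds p.2, pd1 f (p.1, τ) = f' (p.1, τ) (1, 0) := by
      have hopen : IsOpen {τ : ℝ | (p.1, τ) ∈ U} :=
        hU.preimage (by fun_prop : Continuous fun τ : ℝ => (p.1, τ))
      have hmem : p.2 ∈ {τ : ℝ | (p.1, τ) ∈ U} := hp
      filter_upwards [hopen.mem_nhds hmem] with τ hτ
      exact (hasDerivAt_slice1 (hdiff _ hτ).hasFDerivAt).deriv
    have h1 : pd2 (pd1 f) p = deriv (fun τ => f' (p.1, τ) (1, 0)) p.2 :=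
      Filter.EventuallyEq.deriv_eq heq
    rw [h1]
    have h2 : HasFDerivAt (fun q => f' q (1, 0))
        ((ContinuousLinearMap.apply ℝ ℝ ((1 : ℝ), (0 : ℝ))).comp f'') p :=
      (ContinuousLinearMap.apply ℝ ℝ ((1 : ℝ), (0 : ℝ))).hasFDerivAt.comp p hf'p.hasFDerivAt
    have h3 := hasDerivAt_slice2 h2
    simpa using h3.deriv
  rw [hA, hB, hsymm]

lemma deriv2_nonneg_of_isMin {h : ℝ → ℝ} {x : ℝ} (hh : ContDiff ℝ (⊤ : ℕ∞) h)
    (hmin : ∀ y, h x ≤ h y) : deriv h x = 0 ∧ 0 ≤ deriv (deriv h) x := by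
  have hloc : IsLocalMin h x := Filter.Eventually.of_forall fun y => hmin y
  have hd0 : deriv h x = 0 := hloc.deriv_eq_zero
  refine ⟨hd0, ?_⟩
  by_contra hlt
  push_neg at hlt
  set d := deriv (deriv h) x with hd
  have hh2 : ContDiff ℝ ((⊤ : ℕ∞) : WithTop ℕ∞) h := hh.of_le (by simp)
  have hh' : ContDiff ℝ ((⊤ : ℕ∞) : WithTop ℕ∞) (deriv h) := (contDiff_infty_iff_deriv.mp hh2).2
  have hder : HasDerivAt (deriv h) d x := (hh'.differentiable (by norm_num) x).hasDerivAt
  rw [hasDerivAt_iff_tendsto_slope] at hder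
  have hder' : Tendsto (slope (deriv h) x) (nhdsWithin x (Ioi x)) (nhds d) :=
    hder.mono_left (nhdsWithin_mono _ fun y hy => ne_of_gt hy)
  have hev : ∀ᶠ y in nhdsWithin x (Ioi x), slope (deriv h) x y < 0 :=
    hder'.eventually_lt_const hlt
  have hev2 : ∀ᶠ y in nhdsWithin x (Ioi x), deriv h y < 0 := by
    filter_upwards [hev, self_mem_nhdsWithin] with y hy hy'
    rw [slope_def_field, hd0, sub_zero] at hy
    have hyx : 0 < y - x := sub_pos.mpr hy'
    by_contra hcon
    push_neg at hcon
    exact absurd (div_nonneg hcon hyx.le) (not_le.mpr hy)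
  obtain ⟨u, hu, hsub⟩ := mem_nhdsGT_iff_exists_Ioo_subset.mp hev2
  have hxu : x < u := hu
  set u' := (x + u) / 2 with hu'
  have hxu' : x < u' := by simp only [hu']; linarith
  have hu'u : u' < u := by simp only [hu']; linarith
  have hanti : StrictAntiOn h (Icc x u') := by
    refine strictAntiOn_of_deriv_neg (convex_Icc x u') hh.continuous.continuousOn ?_
    intro y hy
    rw [interior_Icc] at hy
    exact hsub ⟨hy.1, hy.2.trans hu'u⟩
  have : h u' < h x := hanti ⟨le_refl x, hxu'.le⟩ ⟨hxu'.le, le_refl u'⟩ hxu'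
  exact absurd (hmin u') (not_le.mpr this)

lemma deriv_nonpos_of_left {η : ℝ → ℝ} {τ₁ τs D : ℝ} (hτ : τ₁ < τs)
    (hder : HasDerivAt η D τs)
    (hpos : ∀ τ, τ₁ ≤ τ → τ < τs → 0 ≤ η τ) (h0 : η τs = 0) : D ≤ 0 := by
  rw [hasDerivAt_iff_tendsto_slope] at hder
  have hder' : Tendsto (slope η τs) (nhdsWithin τs (Iio τs)) (nhds D) :=
    hder.mono_left (nhdsWithin_mono _ fun y hy => ne_of_lt hy)
  have hev : ∀ᶠ τ in nhdsWithin τs (Iio τs), slope η τs τ ≤ 0 := by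
    have hIoo : Ioo τ₁ τs ∈ nhdsWithin τs (Iio τs) :=
      Ioo_mem_nhdsLT_of_mem ⟨hτ, le_refl _⟩
    filter_upwards [hIoo] with τ hτ'
    rw [slope_def_field, h0]
    have h1 : 0 ≤ η τ := hpos τ hτ'.1.le hτ'.2
    have h2 : τ - τs < 0 := sub_neg.mpr hτ'.2
    exact div_nonpos_of_nonneg_of_nonpos (by linarith) h2.le
  exact le_of_tendsto hder' hev

lemma periodic_deriv' {f : ℝ → ℝ} {c : ℝ} (h : Function.Periodic f c) :
    Function.Periodic (deriv f) c := by
  intro x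
  have h1 : (fun y => f (y + c)) = f := funext h
  calc deriv f (x + c) = deriv (fun y => f (y + c)) x := (deriv_comp_add_const f c x).symm
    _ = deriv f x := by rw [h1]
/-- If `κ > 0` is smooth, `2π`-periodic in `θ`, and satisfies the ancient
equation `∂_τ κ = κ² (∂²_θ(gκ) + gκ)` on `(−∞, T)`, then `∂_τ κ ≥ 0` everywhere: the
curvature, as a function of the tangent angle, is nondecreasing in time. -/
theorem acsf_ancient_curvature_monotone
    (g : ℝ → ℝ) (hg : ContDiff ℝ (⊤ : ℕ∞) g) (hgpos : ∀ x, 0 < g x)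
    (hgper : Function.Periodic g (2 * π))
    (T : ℝ)
    (κ : ℝ × ℝ → ℝ)
    (hκ : ContDiffOn ℝ (⊤ : ℕ∞) κ (univ ×ˢ Iio T))
    (hκpos : ∀ θ : ℝ, ∀ τ ∈ Iio T, 0 < κ (θ, τ))
    (hκper : ∀ θ : ℝ, ∀ τ ∈ Iio T, κ (θ + 2 * π, τ) = κ (θ, τ))
    (hpde : ∀ θ : ℝ, ∀ τ ∈ Iio T,
      pd2 κ (θ, τ) =
        (κ (θ, τ)) ^ 2 * (pd1 (pd1 fun q => g q.1 * κ q) (θ, τ) + g θ * κ (θ, τ))) :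
    ∀ θ : ℝ, ∀ τ ∈ Iio T, 0 ≤ pd2 κ (θ, τ) := by
  have hπ : 0 < 2 * π := by linarith [Real.pi_pos]
  set U : Set (ℝ × ℝ) := univ ×ˢ Iio T with hUdef
  have hUo : IsOpen U := isOpen_univ.prod isOpen_Iio
  have hmemU : ∀ {θ τ : ℝ}, τ < T → (θ, τ) ∈ U := fun {θ τ} h => ⟨trivial, h⟩
  set w : ℝ × ℝ → ℝ := fun q => g q.1 * κ q with hwdef
  have hw : ContDiffOn ℝ (⊤ : ℕ∞) w U := (hg.comp contDiff_fst).contDiffOn.mul hκ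
  have hw1 : ContDiffOn ℝ (⊤ : ℕ∞) (pd1 w) U := contDiffOn_pd1 hw hUo
  have hw11 : ContDiffOn ℝ (⊤ : ℕ∞) (pd1 (pd1 w)) U := contDiffOn_pd1 hw1 hUo
  set F : ℝ × ℝ → ℝ := fun p => pd1 (pd1 w) p + w p with hFdef
  have hF : ContDiffOn ℝ (⊤ : ℕ∞) F U := hw11.add hw
  set φ : ℝ × ℝ → ℝ := fun p => κ p * F p with hφdef
  have hφ : ContDiffOn ℝ (⊤ : ℕ∞) φ U := hκ.mul hF
  have hφ1 : ContDiffOn ℝ (⊤ : ℕ∞) (pd1 φ) U := contDiffOn_pd1 hφ hUo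
  -- slice lemmas
  have hsl1 : ∀ (h : ℝ × ℝ → ℝ), ContDiffOn ℝ (⊤ : ℕ∞) h U → ∀ τ : ℝ, τ < T →
      ContDiff ℝ (⊤ : ℕ∞) (fun θ : ℝ => h (θ, τ)) := by
    intro h hh τ hτ
    rw [← contDiffOn_univ]
    exact hh.comp (contDiff_id.prodMk contDiff_const).contDiffOn fun θ _ => hmemU hτ
  have hsl2 : ∀ (h : ℝ × ℝ → ℝ), ContDiffOn ℝ (⊤ : ℕ∞) h U → ∀ θ : ℝ,
      ContDiffOn ℝ (⊤ : ℕ∞) (fun τ : ℝ => h (θ, τ)) (Iio T) := by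
    intro h hh θ
    exact hh.comp (contDiff_const.prodMk contDiff_id).contDiffOn fun τ hτ => hmemU hτ
  have hd2 : ∀ (h : ℝ × ℝ → ℝ), ContDiffOn ℝ (⊤ : ℕ∞) h U → ∀ θ τ : ℝ, τ < T →
      DifferentiableAt ℝ (fun τ' : ℝ => h (θ, τ')) τ := fun h hh θ τ hτ =>
    ((hsl2 h hh θ).contDiffAt (isOpen_Iio.mem_nhds hτ)).differentiableAt (by simp)
  have hdθ : ∀ (h : ℝ × ℝ → ℝ), ContDiffOn ℝ (⊤ : ℕ∞) h U → ∀ τ : ℝ, τ < T → ∀ x : ℝ,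
      DifferentiableAt ℝ (fun y : ℝ => h (y, τ)) x := fun h hh τ hτ x =>
    ((hsl1 h hh τ hτ).differentiable (by simp)).differentiableAt
  -- PDE reformulations
  have hpdeφ : ∀ θ τ : ℝ, τ < T → pd2 κ (θ, τ) = κ (θ, τ) * φ (θ, τ) := by
    intro θ τ hτ
    rw [hpde θ τ hτ]
    simp only [hφdef, hFdef, hwdef]
    ring
  have hpdew : ∀ θ τ : ℝ, τ < T → pd2 w (θ, τ) = w (θ, τ) * φ (θ, τ) := by
    intro θ τ hτ
    have h1 : pd2 w (θ, τ) = g θ * pd2 κ (θ, τ) := by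
      show deriv (fun τ' => w (θ, τ')) τ = _
      have heq : (fun τ' => w (θ, τ')) = fun τ' => g θ * κ (θ, τ') := by
        funext τ'; simp only [hwdef]
      rw [heq, deriv_const_mul _ (hd2 κ hκ θ τ hτ)]
      rfl
    rw [h1, hpdeφ θ τ hτ]
    simp only [hwdef]
    ring
  -- the key evolution identity for φ
  have hkey : ∀ θ τ : ℝ, τ < T →
      pd2 φ (θ, τ) = 2 * φ (θ, τ) ^ 2 + 2 * κ (θ, τ) * pd1 w (θ, τ) * pd1 φ (θ, τ)
        + κ (θ, τ) * w (θ, τ) * pd1 (pd1 φ) (θ, τ) := by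
    intro θ τ hτ
    have e1 : pd2 φ (θ, τ) = pd2 κ (θ, τ) * F (θ, τ) + κ (θ, τ) * pd2 F (θ, τ) := by
      show deriv (fun τ' => φ (θ, τ')) τ = _
      have heq : (fun τ' => φ (θ, τ')) = fun τ' => κ (θ, τ') * F (θ, τ') := rfl
      rw [heq, deriv_fun_mul (hd2 κ hκ θ τ hτ) (hd2 F hF θ τ hτ)]
      rfl
    have e2 : pd2 F (θ, τ) = pd2 (pd1 (pd1 w)) (θ, τ) + pd2 w (θ, τ) := by
      show deriv (fun τ' => F (θ, τ')) τ = _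
      have heq : (fun τ' => F (θ, τ')) = fun τ' => pd1 (pd1 w) (θ, τ') + w (θ, τ') := rfl
      rw [heq, deriv_fun_add (hd2 (pd1 (pd1 w)) hw11 θ τ hτ) (hd2 w hw θ τ hτ)]
      rfl
    have e3 : pd2 (pd1 (pd1 w)) (θ, τ) = pd1 (pd2 (pd1 w)) (θ, τ) :=
      (pd_comm hw1 hUo (hmemU hτ)).symm
    have e4 : pd1 (pd2 (pd1 w)) (θ, τ) = pd1 (pd1 (pd2 w)) (θ, τ) := by
      show deriv (fun x => pd2 (pd1 w) (x, τ)) θ = deriv (fun x => pd1 (pd2 w) (x, τ)) θ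
      congr 1
      funext x
      exact (pd_comm hw hUo (hmemU hτ)).symm
    have e5 : pd1 (pd1 (pd2 w)) (θ, τ) = pd1 (pd1 (fun q => w q * φ q)) (θ, τ) := by
      show deriv (fun x => pd1 (pd2 w) (x, τ)) θ
          = deriv (fun x => pd1 (fun q => w q * φ q) (x, τ)) θ
      congr 1
      funext x
      show deriv (fun y => pd2 w (y, τ)) x = deriv (fun y => w (y, τ) * φ (y, τ)) x
      congr 1
      funext y
      exact hpdew y τ hτ
    have e6a : (fun x => pd1 (fun q => w q * φ q) (x, τ))
        = fun x => pd1 w (x, τ) * φ (x, τ) + w (x, τ) * pd1 φ (x, τ) := by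
      funext x
      show deriv (fun y => w (y, τ) * φ (y, τ)) x = _
      rw [deriv_fun_mul (hdθ w hw τ hτ x) (hdθ φ hφ τ hτ x)]
      rfl
    have e6 : pd1 (pd1 (fun q => w q * φ q)) (θ, τ)
        = pd1 (pd1 w) (θ, τ) * φ (θ, τ) + pd1 w (θ, τ) * pd1 φ (θ, τ)
          + (pd1 w (θ, τ) * pd1 φ (θ, τ) + w (θ, τ) * pd1 (pd1 φ) (θ, τ)) := by
      show deriv (fun x => pd1 (fun q => w q * φ q) (x, τ)) θ = _
      rw [e6a, deriv_fun_add ((hdθ (pd1 w) hw1 τ hτ θ).fun_mul (hdθ φ hφ τ hτ θ))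
        ((hdθ w hw τ hτ θ).fun_mul (hdθ (pd1 φ) hφ1 τ hτ θ)),
        deriv_fun_mul (hdθ (pd1 w) hw1 τ hτ θ) (hdθ φ hφ τ hτ θ),
        deriv_fun_mul (hdθ w hw τ hτ θ) (hdθ (pd1 φ) hφ1 τ hτ θ)]
      rfl
    rw [e1, e2, e3, e4, e5, e6, hpdeφ θ τ hτ, hpdew θ τ hτ]
    simp only [hφdef, hFdef]
    ring
  -- periodicity of the θ-slices of φ
  have hφper : ∀ τ : ℝ, τ < T → Function.Periodic (fun θ => φ (θ, τ)) (2 * π) := by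
    intro τ hτ
    have hκp : Function.Periodic (fun θ => κ (θ, τ)) (2 * π) := fun θ => hκper θ τ hτ
    have hwp : Function.Periodic (fun θ => w (θ, τ)) (2 * π) := by
      intro θ
      simp only [hwdef]
      rw [hgper θ, hκper θ τ hτ]
    have hw1p : Function.Periodic (fun θ => pd1 w (θ, τ)) (2 * π) := by
      have heq : (fun θ => pd1 w (θ, τ)) = deriv (fun θ => w (θ, τ)) := rfl
      rw [heq]
      exact periodic_deriv' hwp
    have hw11p : Function.Periodic (fun θ => pd1 (pd1 w) (θ, τ)) (2 * π) := by
      have heq : (fun θ => pd1 (pd1 w) (θ, τ)) = deriv (fun θ => pd1 w (θ, τ)) := rfl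
      rw [heq]
      exact periodic_deriv' hw1p
    intro θ
    have e1 : κ (θ + 2 * π, τ) = κ (θ, τ) := hκp θ
    have e2 : pd1 (pd1 w) (θ + 2 * π, τ) = pd1 (pd1 w) (θ, τ) := hw11p θ
    have e3 : w (θ + 2 * π, τ) = w (θ, τ) := hwp θ
    show φ (θ + 2 * π, τ) = φ (θ, τ)
    simp only [hφdef, hFdef]
    rw [e1, e2, e3]
  have hred : ∀ τ : ℝ, τ < T → ∀ θ : ℝ, ∃ θ' ∈ Icc (0 : ℝ) (2 * π), φ (θ', τ) = φ (θ, τ) := by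
    intro τ hτ θ
    obtain ⟨y, hy, hEq⟩ := (hφper τ hτ).exists_mem_Ico₀ hπ θ
    exact ⟨y, ⟨hy.1, hy.2.le⟩, hEq.symm⟩
  -- main positivity of φ
  have main : ∀ θ τ : ℝ, τ < T → 0 ≤ φ (θ, τ) := by
    intro θ₀ τ₀ hτ₀
    by_contra hneg
    push_neg at hneg
    set μ : ℝ := -φ (θ₀, τ₀) with hμdef
    have hμpos : 0 < μ := by simp only [hμdef]; linarith
    have hμinv : (0:ℝ) < 1 / μ := by positivity
    set c : ℝ := τ₀ - 1 / μ with hcdef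
    have hcτ₀ : c < τ₀ := by
      have : 0 < 1 / μ := by positivity
      simp only [hcdef]; linarith
    have hcT : c < T := hcτ₀.trans hτ₀
    -- the claim : for every τ₁ ∈ (c, τ₀) the minimum of φ(·,τ₁) is ≤ -(τ₁ - c)⁻¹
    have claim : ∀ τ₁ : ℝ, c < τ₁ → τ₁ < τ₀ →
        ∃ θ' ∈ Icc (0 : ℝ) (2 * π), φ (θ', τ₁) ≤ -(τ₁ - c)⁻¹ := by
      intro τ₁ hcτ₁ hτ₁τ₀
      by_contra hcon
      push_neg at hcon
      have hτ₁T : τ₁ < T := hτ₁τ₀.trans hτ₀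
      have hIcc_ne : (Icc (0 : ℝ) (2 * π)).Nonempty := ⟨0, le_refl _, by linarith⟩
      obtain ⟨θh, hθhmem, hθhmin⟩ := isCompact_Icc.exists_isMinOn hIcc_ne
        ((hsl1 φ hφ τ₁ hτ₁T).continuous.continuousOn :
          ContinuousOn (fun θ : ℝ => φ (θ, τ₁)) (Icc 0 (2 * π)))
      set m₁ : ℝ := φ (θh, τ₁) with hm₁def
      have hm₁gt : -(τ₁ - c)⁻¹ < m₁ := hcon θh hθhmem
      -- choose c' < c with -(τ₁ - c')⁻¹ < m₁
      have hcont0 : Tendsto (fun δ : ℝ => -(τ₁ - c + δ)⁻¹) (nhdsWithin 0 (Ioi 0))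
          (nhds (-(τ₁ - c)⁻¹)) := by
        have hne : τ₁ - c + (0 : ℝ) ≠ 0 := by simpa using (by linarith : (0:ℝ) < τ₁ - c).ne'
        have hc : ContinuousAt (fun δ : ℝ => -(τ₁ - c + δ)⁻¹) 0 :=
          ((continuousAt_const.add continuousAt_id).inv₀ hne).neg
        simpa using hc.tendsto.mono_left nhdsWithin_le_nhds
      obtain ⟨δ, hδlt, hδpos⟩ :=
        ((hcont0.eventually_lt_const hm₁gt).and self_mem_nhdsWithin).exists
      have hδpos' : (0:ℝ) < δ := hδpos
      set c' : ℝ := c - δ with hc'def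
      have hc'c : c' < c := by simp only [hc'def]; linarith [hδpos']
      have hτ₁c' : c' < τ₁ := by linarith
      have hm₁' : -(τ₁ - c')⁻¹ < m₁ := by
        have : τ₁ - c' = τ₁ - c + δ := by simp only [hc'def]; ring
        rw [this]; exact hδlt
      -- compact set where comparison fails
      set S : Set (ℝ × ℝ) := Icc (0 : ℝ) (2 * π) ×ˢ Icc τ₁ τ₀ with hSdef
      have hScomp : IsCompact S := isCompact_Icc.prod isCompact_Icc
      have hSsubU : S ⊆ U := fun p hp => ⟨trivial, lt_of_le_of_lt hp.2.2 hτ₀⟩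
      set ρ : ℝ × ℝ → ℝ := fun p => φ p + (p.2 - c')⁻¹ with hρdef
      have hρcont : ContinuousOn ρ S := by
        refine (hφ.continuousOn.mono hSsubU).add (ContinuousOn.inv₀ ?_ ?_)
        · exact (continuous_snd.sub continuous_const).continuousOn
        · intro p hp
          have h1 : τ₁ ≤ p.2 := hp.2.1
          exact (by linarith : (0:ℝ) < p.2 - c').ne'
      set K : Set (ℝ × ℝ) := S ∩ ρ ⁻¹' Iic 0 with hKdef
      have hKclosed : IsClosed K :=
        hρcont.preimage_isClosed_of_isClosed hScomp.isClosed isClosed_Iic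
      have hKcomp : IsCompact K := hScomp.of_isClosed_subset hKclosed inter_subset_left
      obtain ⟨θ₀', hθ₀'mem, hθ₀'eq⟩ := hred τ₀ hτ₀ θ₀
      have hinvμ : (τ₀ - c')⁻¹ < μ := by
        have h1 : 1 / μ < τ₀ - c' := by simp only [hc'def, hcdef]; linarith
        have h2 : 0 < τ₀ - c' := lt_trans (by positivity) h1
        have h3 := one_div_lt_one_div_of_lt (by positivity : (0:ℝ) < 1 / μ) h1
        rw [one_div_one_div] at h3
        calc (τ₀ - c')⁻¹ = 1 / (τ₀ - c') := (one_div _).symm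
          _ < μ := h3
      have hK0 : (θ₀', τ₀) ∈ K := by
        refine ⟨⟨hθ₀'mem, ⟨hτ₁τ₀.le, le_refl _⟩⟩, ?_⟩
        show φ (θ₀', τ₀) + (τ₀ - c')⁻¹ ≤ 0
        have h1 : φ (θ₀', τ₀) = -μ := by rw [hθ₀'eq]; simp only [hμdef]; ring
        rw [h1]
        linarith
      obtain ⟨⟨θs, τs⟩, hpK, hpmin⟩ :=
        hKcomp.exists_isMinOn ⟨_, hK0⟩ (continuous_snd.continuousOn : ContinuousOn Prod.snd K)
      have hθsI : θs ∈ Icc (0:ℝ) (2 * π) := hpK.1.1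
      have hτsI : τs ∈ Icc τ₁ τ₀ := hpK.1.2
      have hρs : φ (θs, τs) + (τs - c')⁻¹ ≤ 0 := hpK.2
      have hτsT : τs < T := lt_of_le_of_lt hτsI.2 hτ₀
      have hτsc' : c' < τs := lt_of_lt_of_le hτ₁c' hτsI.1
      have hτ₁τs : τ₁ < τs := by
        rcases lt_or_eq_of_le hτsI.1 with h | h
        · exact h
        · exfalso
          have h1 : m₁ ≤ φ (θs, τ₁) := hθhmin hθsI
          rw [h] at h1
          have h2 : (0:ℝ) < τs - c' := by linarith
          have h3 : -(τs - c')⁻¹ < φ (θs, τs) := by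
            rw [← h]
            calc -(τ₁ - c')⁻¹ < m₁ := hm₁'
              _ ≤ φ (θs, τ₁) := by rw [← h] at h1; exact h1
          linarith
      have hbefore : ∀ θ : ℝ, ∀ τ : ℝ, τ₁ ≤ τ → τ < τs → -(τ - c')⁻¹ < φ (θ, τ) := by
        intro θ τ h1 h2
        by_contra hc3
        push_neg at hc3
        have hτT : τ < T := lt_of_lt_of_le h2 (le_of_lt hτsT)
        obtain ⟨θ', hθ'mem, hθ'eq⟩ := hred τ hτT θ
        have hmemK : (θ', τ) ∈ K := by
          refine ⟨⟨hθ'mem, ⟨h1, h2.le.trans hτsI.2⟩⟩, ?_⟩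
          show φ (θ', τ) + (τ - c')⁻¹ ≤ 0
          rw [hθ'eq]
          linarith
        have := hpmin hmemK
        simp only at this
        exact absurd this (not_le.mpr h2)
      have hatstar : ∀ θ : ℝ, -(τs - c')⁻¹ ≤ φ (θ, τs) := by
        intro θ
        have hcont : ContinuousAt (fun τ => φ (θ, τ) + (τ - c')⁻¹) τs := by
          refine ContinuousAt.add ?_ ?_
          · exact ((hsl2 φ hφ θ).contDiffAt (isOpen_Iio.mem_nhds hτsT)).continuousAt
          · exact ((continuousAt_id.sub continuousAt_const).inv₀
              (by linarith : τs - c' ≠ 0))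
        have htend : Tendsto (fun τ => φ (θ, τ) + (τ - c')⁻¹) (nhdsWithin τs (Iio τs))
            (nhds (φ (θ, τs) + (τs - c')⁻¹)) := hcont.tendsto.mono_left nhdsWithin_le_nhds
        have hev : ∀ᶠ τ in nhdsWithin τs (Iio τs), 0 ≤ φ (θ, τ) + (τ - c')⁻¹ := by
          have hIoo : Ioo τ₁ τs ∈ nhdsWithin τs (Iio τs) :=
            Ioo_mem_nhdsLT_of_mem ⟨hτ₁τs, le_refl _⟩
          filter_upwards [hIoo] with τ hτ'
          have := hbefore θ τ hτ'.1.le hτ'.2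
          linarith
        have := ge_of_tendsto htend hev
        linarith
      have heqstar : φ (θs, τs) = -(τs - c')⁻¹ :=
        le_antisymm (by linarith) (hatstar θs)
      -- spatial minimum facts
      have hminθ : ∀ y : ℝ, φ (θs, τs) ≤ φ (y, τs) := fun y => by
        rw [heqstar]; exact hatstar y
      obtain ⟨hd1z, hd2nn⟩ := deriv2_nonneg_of_isMin (hsl1 φ hφ τs hτsT) hminθ
      have hpd1z : pd1 φ (θs, τs) = 0 := hd1z
      have hpd11nn : 0 ≤ pd1 (pd1 φ) (θs, τs) := hd2nn
      -- temporal derivative at τs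
      have hη1 : HasDerivAt (fun τ => φ (θs, τ)) (pd2 φ (θs, τs)) τs :=
        (hd2 φ hφ θs τs hτsT).hasDerivAt
      have hη2 : HasDerivAt (fun τ : ℝ => (τ - c')⁻¹) (-(1 : ℝ) / (τs - c') ^ 2) τs := by
        have h1 : HasDerivAt (fun τ : ℝ => τ - c') (1 : ℝ) τs := (hasDerivAt_id τs).sub_const c'
        exact h1.inv (by linarith : τs - c' ≠ 0)
      have hηder : HasDerivAt (fun τ => φ (θs, τ) + (τ - c')⁻¹)
          (pd2 φ (θs, τs) + -(1 : ℝ) / (τs - c') ^ 2) τs := hη1.add hη2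
      have hD : pd2 φ (θs, τs) + -(1 : ℝ) / (τs - c') ^ 2 ≤ 0 := by
        refine deriv_nonpos_of_left hτ₁τs hηder ?_ ?_
        · intro τ ha hb
          have := hbefore θs τ ha hb
          linarith
        · rw [heqstar]; ring
      -- PDE lower bound
      have hκs : 0 < κ (θs, τs) := hκpos θs τs hτsT
      have hws : 0 < w (θs, τs) := by
        simp only [hwdef]
        exact mul_pos (hgpos θs) hκs
      have hkey' := hkey θs τs hτsT
      rw [hpd1z] at hkey'
      have hlow : 2 * φ (θs, τs) ^ 2 ≤ pd2 φ (θs, τs) := by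
        rw [hkey']
        have : 0 ≤ κ (θs, τs) * w (θs, τs) * pd1 (pd1 φ) (θs, τs) :=
          mul_nonneg (mul_pos hκs hws).le hpd11nn
        linarith
      have hx : 0 < (τs - c')⁻¹ := by
        have : 0 < τs - c' := by linarith
        positivity
      have hφ2 : φ (θs, τs) ^ 2 = ((τs - c') ^ 2)⁻¹ := by
        rw [heqstar]
        rw [← inv_pow]
        ring
      rw [hφ2] at hlow
      have hxx : 0 < ((τs - c') ^ 2)⁻¹ := by
        have : 0 < τs - c' := by linarith
        positivity
      have : -(1:ℝ) / (τs - c') ^ 2 = -((τs - c') ^ 2)⁻¹ := by ring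
      rw [this] at hD
      linarith
    -- derive contradiction from the claim: φ is bounded below on a compact set
    set S₀ : Set (ℝ × ℝ) := Icc (0 : ℝ) (2 * π) ×ˢ Icc c τ₀ with hS₀def
    have hS₀comp : IsCompact S₀ := isCompact_Icc.prod isCompact_Icc
    have hS₀U : S₀ ⊆ U := fun p hp => ⟨trivial, lt_of_le_of_lt hp.2.2 hτ₀⟩
    have hS₀ne : S₀.Nonempty := by
      refine ⟨(0, τ₀), ⟨⟨le_refl (0:ℝ), ?_⟩, ⟨hcτ₀.le, le_refl τ₀⟩⟩⟩
      show (0:ℝ) ≤ 2 * π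
      linarith
    obtain ⟨pB, hpBmem, hpBmin⟩ :=
      hS₀comp.exists_isMinOn hS₀ne (hφ.continuousOn.mono hS₀U)
    set B : ℝ := φ pB with hBdef
    set ε : ℝ := min ((τ₀ - c) / 2) (1 / (1 + |B|)) with hεdef
    have hεpos : 0 < ε := by
      rw [hεdef]
      refine lt_min (by linarith) (by positivity)
    set τ₁ : ℝ := c + ε with hτ₁def
    clear_value μ c B ε τ₁
    have h1 : c < τ₁ := by simp only [hτ₁def]; linarith
    have h2 : τ₁ < τ₀ := by
      have h3 : ε ≤ (τ₀ - c) / 2 := by rw [hεdef]; exact min_le_left _ _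
      simp only [hτ₁def]; linarith [hεdef.le, hεdef.ge, h3, hεpos]
    obtain ⟨θ', hθ'mem, hle⟩ := claim τ₁ h1 h2
    have hmemS₀ : (θ', τ₁) ∈ S₀ := ⟨hθ'mem, ⟨h1.le, h2.le⟩⟩
    have hBle : B ≤ φ (θ', τ₁) := by rw [hBdef]; exact hpBmin hmemS₀
    have hεle : ε * (1 + |B|) ≤ 1 := by
      have h3 : ε ≤ 1 / (1 + |B|) := by rw [hεdef]; exact min_le_right _ _
      have h4 : (0:ℝ) < 1 + |B| := by positivity
      calc ε * (1 + |B|) ≤ (1 / (1 + |B|)) * (1 + |B|) := by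
            exact mul_le_mul_of_nonneg_right h3 h4.le
        _ = 1 := by field_simp
    have hτ₁c : τ₁ - c = ε := by simp only [hτ₁def]; ring
    rw [hτ₁c] at hle
    -- φ (θ', τ₁) ≤ -ε⁻¹ and B ≤ φ (θ', τ₁), B ≥ -|B|
    have hBabs : -|B| ≤ B := neg_abs_le B
    have h5 : ε * ε⁻¹ = 1 := mul_inv_cancel₀ hεpos.ne'
    have hεinv : 1 + |B| ≤ ε⁻¹ := by nlinarith
    have h6 : ε⁻¹ ≤ |B| := by linarith
    linarith
  -- conclude
  intro θ τ hτ
  rw [mem_Iio] at hτ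
  rw [hpdeφ θ τ hτ]
  exact mul_nonneg (hκpos θ τ hτ).le (main θ τ hτ)
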